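/- arXiv:1109.1546 — 2 statements merged into one kernel-verified Lean document; each statement's English description precedes it below -/
import Mathlib

section
/- Let (Z, 𝒵, μ) be a measure space, let B, q ≥ 2 be integers, and let b₁,...,b_q be nonempty subsets of {1,...,B} such that their union is {1,...,B} and every element k ∈ {1,...,B} belongs to exactly two of the sets b_i. Let F₁,...,F_q be functions with F_i ∈ L²(μ^{|b_i|}). Then ∫_{Z^B} ∏_{i=1}^q |F_i(z_{b_i})| dμ(z₁)···dμ(z_B) ≤ ∏_{i=1}^q ‖F_i‖_{L²(μ^{|b_i|})}, where z_{b_i} denotes the subvector of (z₁,...,z_B) with indices in b_i. -/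
/-!
Integrate the variables out one at a time. A variable `z_k` occurs in exactly two factors, so the
integral in `z_k` is bounded by Cauchy–Schwarz by the product of the partial `L²` norms of these
two factors in `z_k`, all other factors being constant in `z_k`. This is again a product of the
same shape, in which `k` has been removed from both index sets, and iterated partial `L²` norms
compose (Tonelli), so after the last variable each factor has become its full `L²` norm.
-/

open MeasureTheory Function Finset
open scoped ENNReal

section

variable {ι : Type*} {X : ι → Type*} [∀ i, MeasurableSpace (X i)] {μ : ∀ i, Measure (X i)}

theorem quasiMeasurePreserving_finset_restrict [Fintype ι] [∀ i, SigmaFinite (μ i)]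
    (s : Finset ι) :
    Measure.QuasiMeasurePreserving s.restrict (Measure.pi μ) (Measure.pi fun i : s => μ i) := by
  classical
  convert Measure.quasiMeasurePreserving_fst.comp
    (measurePreserving_piEquivPiSubtypeProd μ (· ∈ s)).quasiMeasurePreserving
  rfl

variable [DecidableEq ι]

theorem DependsOn.lmarginal {f : (∀ i, X i) → ℝ≥0∞} {b : Set ι} (hf : DependsOn f b)
    (s : Finset ι) : DependsOn (∫⋯∫⁻_s, f ∂μ) (b \ s) :=
  fun _ _ h => lintegral_congr fun y => hf.updateFinset y h

variable (μ) in
/-- The partial `L²` norm of `f` in the variables indexed by `s`, a function of the others. -/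
noncomputable def lmarginalL2 (s : Finset ι) (f : (∀ i, X i) → ℝ≥0∞) : (∀ i, X i) → ℝ≥0∞ :=
  fun x => (∫⋯∫⁻_s, (fun y => f y ^ (2 : ℝ)) ∂μ) x ^ (1 / 2 : ℝ)

@[simp]
theorem lmarginalL2_empty (f : (∀ i, X i) → ℝ≥0∞) : lmarginalL2 μ ∅ f = f := by
  ext x
  rw [lmarginalL2, lmarginal_empty, ← ENNReal.rpow_mul]
  norm_num

theorem lmarginalL2_singleton (f : (∀ i, X i) → ℝ≥0∞) (k : ι) (x : ∀ i, X i) :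
    lmarginalL2 μ {k} f x = (∫⁻ t, f (update x k t) ^ (2 : ℝ) ∂μ k) ^ (1 / 2 : ℝ) := by
  rw [lmarginalL2, lmarginal_singleton]

theorem DependsOn.lmarginalL2 {f : (∀ i, X i) → ℝ≥0∞} {b : Set ι} (hf : DependsOn f b)
    (s : Finset ι) : DependsOn (lmarginalL2 μ s f) (b \ s) := fun x y h => by
  have hf2 : DependsOn (fun y => f y ^ (2 : ℝ)) b := fun _ _ h => congrArg (· ^ (2 : ℝ)) (hf h)
  simp only [_root_.lmarginalL2, hf2.lmarginal s h]

theorem lmarginalL2_comp_restrict (s : Finset ι) (g : (∀ i : s, X i) → ℝ≥0∞) (x : ∀ i, X i) :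
    lmarginalL2 μ s (fun y => g (s.restrict y)) x
      = eLpNorm g 2 (Measure.pi fun i : s => μ i) := by
  rw [eLpNorm_eq_lintegral_rpow_enorm_toReal (by norm_num) (by norm_num)]
  simp [lmarginalL2, lmarginal, restrict_updateFinset]

theorem lintegral_update_mul_le {f g : (∀ i, X i) → ℝ≥0∞} (hf : Measurable f)
    (hg : Measurable g) (k : ι) (x : ∀ i, X i) :
    ∫⁻ t, f (update x k t) * g (update x k t) ∂μ k
      ≤ lmarginalL2 μ {k} f x * lmarginalL2 μ {k} g x := by
  simp only [lmarginalL2_singleton]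
  exact ENNReal.lintegral_mul_le_Lp_mul_Lq _ .two_two
    (hf.comp (measurable_update x)).aemeasurable (hg.comp (measurable_update x)).aemeasurable

theorem lintegral_prod_update_le {κ : Type*} [Fintype κ] {f : κ → (∀ i, X i) → ℝ≥0∞}
    (hf : ∀ j, Measurable (f j)) {p : κ → Prop} [DecidablePred p] (hp : #{j | p j} = 2)
    {k : ι} (hdep : ∀ j, ¬p j → DependsOn (f j) {k}ᶜ) (x : ∀ i, X i) :
    ∫⁻ t, ∏ j, f j (update x k t) ∂μ k
      ≤ ∏ j, if p j then lmarginalL2 μ {k} (f j) x else f j x := by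
  classical
  obtain ⟨j₀, j₁, hne, hpair⟩ := card_eq_two.mp hp
  set C := ∏ j ∈ {j | ¬p j}, f j x
  have hC : ∀ t, ∏ j ∈ {j | ¬p j}, f j (update x k t) = C := fun t =>
    prod_congr rfl fun j hj => hdep j (mem_filter.mp hj).2 fun i hi => update_of_ne hi t x
  calc ∫⁻ t, ∏ j, f j (update x k t) ∂μ k
      = ∫⁻ t, f j₀ (update x k t) * f j₁ (update x k t) * C ∂μ k := by
        simp_rw [← prod_filter_mul_prod_filter_not univ p, hC, hpair, prod_pair hne]
    _ = (∫⁻ t, f j₀ (update x k t) * f j₁ (update x k t) ∂μ k) * C :=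
        lintegral_mul_const _
          (((hf j₀).comp (measurable_update x)).mul ((hf j₁).comp (measurable_update x)))
    _ ≤ lmarginalL2 μ {k} (f j₀) x * lmarginalL2 μ {k} (f j₁) x * C := by
        gcongr
        exact lintegral_update_mul_le (hf j₀) (hf j₁) k x
    _ = ∏ j, if p j then lmarginalL2 μ {k} (f j) x else f j x := by
        rw [prod_ite, hpair, prod_pair hne]

section SigmaFinite

variable [∀ i, SigmaFinite (μ i)]

theorem Measurable.lmarginalL2 {f : (∀ i, X i) → ℝ≥0∞} (hf : Measurable f) (s : Finset ι) :
    Measurable (lmarginalL2 μ s f) :=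
  ((hf.pow_const _).lmarginal μ).pow_const _

theorem lmarginalL2_lmarginalL2 {f : (∀ i, X i) → ℝ≥0∞} (hf : Measurable f) {s t : Finset ι}
    (hst : Disjoint s t) : lmarginalL2 μ s (lmarginalL2 μ t f) = lmarginalL2 μ (s ∪ t) f := by
  ext x
  simp only [_root_.lmarginalL2, ← ENNReal.rpow_mul]
  norm_num
  rw [lmarginal_union μ _ (hf.pow_const _) hst]

theorem lmarginal_prod_le_prod_lmarginalL2 {κ : Type*} [Fintype κ] {s : Finset ι}
    {b : κ → Finset ι} {f : κ → (∀ i, X i) → ℝ≥0∞} (hf : ∀ j, Measurable (f j))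
    (hdep : ∀ j, DependsOn (f j) (b j)) (hbs : ∀ j, b j ⊆ s)
    (htwo : ∀ k ∈ s, #{j | k ∈ b j} = 2) :
    ∫⋯∫⁻_s, (fun x => ∏ j, f j x) ∂μ ≤ fun x => ∏ j, lmarginalL2 μ (b j) (f j) x := by
  induction s using Finset.induction_on generalizing b f with
  | empty =>
    simp [fun j => subset_empty.mp (hbs j)]
  | insert k s hk ih =>
    -- integrating out `z_k` replaces the two factors containing `k` by their `L²` norms in `z_k`
    set f' : κ → (∀ i, X i) → ℝ≥0∞ := fun j => if k ∈ b j then lmarginalL2 μ {k} (f j) else f j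
    have hf' (j : κ) : Measurable (f' j) := by
      by_cases hkj : k ∈ b j
      · simpa [f', hkj] using (hf j).lmarginalL2 {k}
      · simpa [f', hkj] using hf j
    have hdep' (j : κ) : DependsOn (f' j) ((b j).erase k) := by
      by_cases hkj : k ∈ b j
      · simpa [f', hkj, coe_erase] using (hdep j).lmarginalL2 {k}
      · simpa [f', hkj, erase_eq_of_notMem hkj] using hdep j
    have hbs' (j : κ) : (b j).erase k ⊆ s := by
      simpa [erase_insert hk] using erase_subset_erase k (hbs j)
    have htwo' (k' : ι) (hk' : k' ∈ s) : #{j | k' ∈ (b j).erase k} = 2 := by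
      simpa [mem_erase, ne_of_mem_of_not_mem hk' hk] using htwo k' (mem_insert_of_mem hk')
    have hL2 (j : κ) : lmarginalL2 μ ((b j).erase k) (f' j) = lmarginalL2 μ (b j) (f j) := by
      by_cases hkj : k ∈ b j
      · rw [← insert_erase hkj, insert_eq, union_comm]
        simp [f', hkj,
          lmarginalL2_lmarginalL2 (hf j) (disjoint_singleton_right.2 (notMem_erase k _))]
      · simp [f', hkj]
    have hdep_k (j : κ) (hkj : k ∉ b j) : DependsOn (f j) {k}ᶜ :=
      (hdep j).mono fun i hi => by rintro rfl; exact hkj hi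
    calc ∫⋯∫⁻_insert k s, (fun x => ∏ j, f j x) ∂μ
        = ∫⋯∫⁻_s, (fun x => ∫⁻ t, ∏ j, f j (update x k t) ∂μ k) ∂μ :=
          lmarginal_insert' _ (measurable_prod _ fun j _ => hf j) hk
      _ ≤ ∫⋯∫⁻_s, (fun x => ∏ j, f' j x) ∂μ := lmarginal_mono fun x =>
          (lintegral_prod_update_le hf (htwo k (mem_insert_self k s)) hdep_k x).trans_eq
            (by simp only [f', ite_apply])
      _ ≤ fun x => ∏ j, lmarginalL2 μ ((b j).erase k) (f' j) x := ih hf' hdep' hbs' htwo'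
      _ = fun x => ∏ j, lmarginalL2 μ (b j) (f j) x := by simp_rw [hL2]

variable [Fintype ι] {κ : Type*} [Fintype κ] {b : κ → Finset ι}

theorem lintegral_prod_restrict_le_prod_eLpNorm_of_measurable
    {g : (j : κ) → (∀ i : b j, X i) → ℝ≥0∞} (hg : ∀ j, Measurable (g j))
    (htwo : ∀ k, #{j | k ∈ b j} = 2) :
    ∫⁻ x, ∏ j, g j ((b j).restrict x) ∂Measure.pi μ
      ≤ ∏ j, eLpNorm (g j) 2 (Measure.pi fun i : b j => μ i) := by
  rcases isEmpty_or_nonempty (∀ i, X i) with hX | ⟨⟨x₀⟩⟩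
  · simp [lintegral_of_isEmpty]
  rw [lintegral_eq_lmarginal_univ x₀]
  calc _ ≤ ∏ j, lmarginalL2 μ (b j) (fun x => g j ((b j).restrict x)) x₀ :=
        lmarginal_prod_le_prod_lmarginalL2 (fun j => (hg j).comp (measurable_restrict _))
          (fun j _ _ h => congrArg (g j) (dependsOn_restrict _ h)) (fun j => subset_univ _)
          (fun k _ => htwo k) x₀
    _ = _ := by simp_rw [lmarginalL2_comp_restrict]

theorem lintegral_prod_restrict_le_prod_eLpNorm {g : (j : κ) → (∀ i : b j, X i) → ℝ≥0∞}
    (hg : ∀ j, AEMeasurable (g j) (Measure.pi fun i : b j => μ i))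
    (htwo : ∀ k, #{j | k ∈ b j} = 2) :
    ∫⁻ x, ∏ j, g j ((b j).restrict x) ∂Measure.pi μ
      ≤ ∏ j, eLpNorm (g j) 2 (Measure.pi fun i : b j => μ i) := by
  have hae : ∀ᵐ x ∂Measure.pi μ, ∀ j, g j ((b j).restrict x) = (hg j).mk _ ((b j).restrict x) :=
    ae_all_iff.mpr fun j =>
      (quasiMeasurePreserving_finset_restrict (b j)).ae_eq_comp (hg j).ae_eq_mk
  calc ∫⁻ x, ∏ j, g j ((b j).restrict x) ∂Measure.pi μ
      = ∫⁻ x, ∏ j, (hg j).mk _ ((b j).restrict x) ∂Measure.pi μ :=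
        lintegral_congr_ae (hae.mono fun x hx => by simp_rw [hx])
    _ ≤ ∏ j, eLpNorm ((hg j).mk _) 2 (Measure.pi fun i : b j => μ i) :=
        lintegral_prod_restrict_le_prod_eLpNorm_of_measurable (fun j => (hg j).measurable_mk) htwo
    _ = ∏ j, eLpNorm (g j) 2 (Measure.pi fun i : b j => μ i) := by
        simp_rw [eLpNorm_congr_ae (hg _).ae_eq_mk]

theorem integral_prod_abs_restrict_le_prod_eLpNorm {F : (j : κ) → (∀ i : b j, X i) → ℝ}
    (hF : ∀ j, MemLp (F j) 2 (Measure.pi fun i : b j => μ i))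
    (htwo : ∀ k, #{j | k ∈ b j} = 2) :
    ∫ x, ∏ j, |F j ((b j).restrict x)| ∂Measure.pi μ
      ≤ ∏ j, (eLpNorm (F j) 2 (Measure.pi fun i : b j => μ i)).toReal := by
  have hfin : ∏ j, eLpNorm (F j) 2 (Measure.pi fun i : b j => μ i) ≠ ∞ :=
    (ENNReal.prod_lt_top fun j _ => (hF j).2).ne
  have hle : ‖∫ x, ∏ j, |F j ((b j).restrict x)| ∂Measure.pi μ‖ₑ
      ≤ ∏ j, eLpNorm (F j) 2 (Measure.pi fun i : b j => μ i) :=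
    calc _ ≤ ∫⁻ x, ‖∏ j, |F j ((b j).restrict x)|‖ₑ ∂Measure.pi μ :=
          enorm_integral_le_lintegral_enorm _
      _ = ∫⁻ x, ∏ j, ‖F j ((b j).restrict x)‖ₑ ∂Measure.pi μ := by
          simp [enorm_eq_nnnorm, nnnorm_prod]
      _ ≤ ∏ j, eLpNorm (fun y => ‖F j y‖ₑ) 2 (Measure.pi fun i : b j => μ i) :=
          lintegral_prod_restrict_le_prod_eLpNorm (fun j => (hF j).1.enorm) htwo
      _ = _ := by simp only [eLpNorm_enorm]
  rw [← ENNReal.toReal_prod]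
  calc _ ≤ ‖∫ x, ∏ j, |F j ((b j).restrict x)| ∂Measure.pi μ‖ := Real.le_norm_self _
    _ ≤ _ := by rw [← toReal_enorm]; exact ENNReal.toReal_mono hfin hle

end SigmaFinite

end

theorem generalized_cauchy_schwarz_general
    {Z : Type*} [MeasurableSpace Z] (μ : Measure Z) [SigmaFinite μ]
    (B q : ℕ)
    (b : Fin q → Finset (Fin B))
    (htwo : ∀ k : Fin B, (Finset.univ.filter fun i => k ∈ b i).card = 2)
    (F : (i : Fin q) → (↥(b i) → Z) → ℝ)
    (hF : ∀ i, MemLp (F i) 2 (Measure.pi fun _ : ↥(b i) => μ)) :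
    ∫ z : Fin B → Z, ∏ i, |F i (fun k => z k.1)| ∂(Measure.pi fun _ => μ)
      ≤ ∏ i, (eLpNorm (F i) 2 (Measure.pi fun _ : ↥(b i) => μ)).toReal :=
  integral_prod_abs_restrict_le_prod_eLpNorm hF htwo

theorem generalized_cauchy_schwarz
    {Z : Type*} [MeasurableSpace Z] (μ : Measure Z) [SigmaFinite μ]
    (B q : ℕ) (hB : 2 ≤ B) (hq : 2 ≤ q)
    (b : Fin q → Finset (Fin B))
    (hne : ∀ i, (b i).Nonempty)
    (hcover : ∀ k : Fin B, ∃ i, k ∈ b i)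
    (htwo : ∀ k : Fin B, (Finset.univ.filter fun i => k ∈ b i).card = 2)
    (F : (i : Fin q) → (↥(b i) → Z) → ℝ)
    (hF : ∀ i, MemLp (F i) 2 (Measure.pi fun _ : ↥(b i) => μ)) :
    ∫ z : Fin B → Z, ∏ i, |F i (fun k => z k.1)| ∂(Measure.pi fun _ => μ)
      ≤ ∏ i, (eLpNorm (F i) 2 (Measure.pi fun _ : ↥(b i) => μ)).toReal :=
  generalized_cauchy_schwarz_general μ B q b htwo F hF
end

section
/- Let q ≥ 3 and let ρ : ℤ → ℝ be a sequence with ρ ∈ ℓ^q(ℤ). For n ≥ 1 set ρ_n(k) = ρ(k)·1_{|k|<n}. Then for every ε > 0 there exists N such that for n ≥ N, (1/n)(∑_{|k|<n}|ρ(k)|^{q−1})²(∑_{|k|<n}|ρ(k)|²) < ε; that is, (1/n)(∑_{|k|<n}|ρ(k)|^{q−1})²(∑_{|k|<n}|ρ(k)|²) → 0 as n → ∞. -/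
lemma aux_pointwise (x δ : ℝ) (hx : 0 ≤ x) (hδ : 0 < δ) (j q : ℕ) (hj : j ≤ q) :
    x ^ j ≤ δ ^ j + x ^ q / δ ^ (q - j) := by
  rcases le_or_gt x δ with h | h
  · have h1 : x ^ j ≤ δ ^ j := pow_le_pow_left₀ hx h j
    have h2 : 0 ≤ x ^ q / δ ^ (q - j) := by positivity
    linarith
  · have h1 : x ^ j ≤ x ^ q / δ ^ (q - j) := by
      rw [le_div_iff₀ (by positivity)]
      calc x ^ j * δ ^ (q - j) ≤ x ^ j * x ^ (q - j) := by
            apply mul_le_mul_of_nonneg_left (pow_le_pow_left₀ hδ.le h.le _) (by positivity)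
        _ = x ^ q := by rw [← pow_add]; congr 1; omega
    have h2 : 0 ≤ δ ^ j := by positivity
    linarith

lemma aux_split (ρ : ℤ → ℝ) (q j : ℕ) (hj : j ≤ q) (δ : ℝ) (hδ : 0 < δ)
    (n M : ℕ) (T : ℝ)
    (hT : ∑ k ∈ Finset.Ioo (-(n:ℤ)) n \ Finset.Icc (-(M:ℤ)) M, |ρ k| ^ q ≤ T) :
    ∑ k ∈ Finset.Ioo (-(n:ℤ)) n, |ρ k| ^ j ≤
      (∑ k ∈ Finset.Icc (-(M:ℤ)) M, |ρ k| ^ j) + 2 * n * δ ^ j + T / δ ^ (q - j) := by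
  rw [← Finset.sum_inter_add_sum_sdiff (Finset.Ioo (-(n:ℤ)) n) (Finset.Icc (-(M:ℤ)) M)
    (fun k => |ρ k| ^ j)]
  have h1 : ∑ k ∈ Finset.Ioo (-(n:ℤ)) n ∩ Finset.Icc (-(M:ℤ)) M, |ρ k| ^ j ≤
      ∑ k ∈ Finset.Icc (-(M:ℤ)) M, |ρ k| ^ j := by
    apply Finset.sum_le_sum_of_subset_of_nonneg Finset.inter_subset_right
    intro i _ _; positivity
  have h2 : ∑ k ∈ Finset.Ioo (-(n:ℤ)) n \ Finset.Icc (-(M:ℤ)) M, |ρ k| ^ j ≤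
      2 * n * δ ^ j + T / δ ^ (q - j) := by
    set t := Finset.Ioo (-(n:ℤ)) n \ Finset.Icc (-(M:ℤ)) M with ht
    have hcard : (t.card : ℝ) ≤ 2 * n := by
      have h3 : t.card ≤ (Finset.Ioo (-(n:ℤ)) n).card :=
        Finset.card_le_card (Finset.sdiff_subset)
      have h4 : (Finset.Ioo (-(n:ℤ)) n).card = ((n:ℤ) - (-(n:ℤ)) - 1).toNat := Int.card_Ioo _ _
      have h5 : (Finset.Ioo (-(n:ℤ)) n).card ≤ 2 * n := by omega
      have := h3.trans h5
      exact_mod_cast Nat.cast_le.mpr this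
    calc ∑ k ∈ t, |ρ k| ^ j ≤ ∑ k ∈ t, (δ ^ j + |ρ k| ^ q / δ ^ (q - j)) := by
          apply Finset.sum_le_sum
          intro i _
          exact aux_pointwise _ _ (abs_nonneg _) hδ _ _ hj
      _ = t.card * δ ^ j + (∑ k ∈ t, |ρ k| ^ q) / δ ^ (q - j) := by
          rw [Finset.sum_add_distrib, Finset.sum_const, Finset.sum_div, nsmul_eq_mul]
      _ ≤ 2 * n * δ ^ j + T / δ ^ (q - j) := by
          gcongr
  linarith

/-- Key step in the Breuer–Major CLT: if `ρ ∈ ℓ^q(ℤ)` with `q ≥ 3`, then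
`(1/n)(∑_{|k|<n}|ρ(k)|^{q-1})²(∑_{|k|<n}|ρ(k)|²) → 0`; more precisely, for every
`ε > 0` there is `N` such that the quantity is `< ε` for all `n ≥ N`. -/
theorem breuer_major_fourth_cumulant_step (q : ℕ) (hq : 3 ≤ q) (ρ : ℤ → ℝ)
    (hsum : Summable fun k : ℤ => |ρ k| ^ q) :
    ∀ ε : ℝ, 0 < ε → ∃ N : ℕ, ∀ n : ℕ, N ≤ n →
      (1 / (n : ℝ)) *
          (∑ k ∈ Finset.Ioo (-(n : ℤ)) (n : ℤ), |ρ k| ^ (q - 1)) ^ 2 *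
          (∑ k ∈ Finset.Ioo (-(n : ℤ)) (n : ℤ), |ρ k| ^ 2) < ε := by
  intro ε hε
  set η : ℝ := min 1 (ε / 128) with hη_def
  have hη : 0 < η := lt_min one_pos (by positivity)
  have hη1 : η ≤ 1 := min_le_left _ _
  have hηε : η ≤ ε / 128 := min_le_right _ _
  -- tail control from summability
  obtain ⟨s₀, hs₀⟩ := hsum.vanishing (e := Set.Iio (η ^ q)) (Iio_mem_nhds (by positivity))
  set M : ℕ := s₀.sup Int.natAbs with hM_def
  have hs₀sub : s₀ ⊆ Finset.Icc (-(M:ℤ)) M := by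
    intro k hk
    have : k.natAbs ≤ M := Finset.le_sup hk
    simp only [Finset.mem_Icc]
    omega
  set C1 : ℝ := ∑ k ∈ Finset.Icc (-(M:ℤ)) M, |ρ k| ^ (q - 1) with hC1
  set C2 : ℝ := ∑ k ∈ Finset.Icc (-(M:ℤ)) M, |ρ k| ^ 2 with hC2
  have hC1nn : 0 ≤ C1 := Finset.sum_nonneg fun i _ => by positivity
  have hC2nn : 0 ≤ C2 := Finset.sum_nonneg fun i _ => by positivity
  set K : ℝ := max 1 (max (C1 / η) (C2 / η)) with hK_def
  have hK1 : 1 ≤ K := le_max_left _ _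
  obtain ⟨N, hN⟩ := exists_nat_ge (K ^ q)
  refine ⟨N, fun n hn => ?_⟩
  have hnK : K ^ q ≤ (n : ℝ) := hN.trans (Nat.cast_le.mpr hn)
  have hn1 : (1:ℝ) ≤ (n:ℝ) := le_trans (one_le_pow₀ hK1 |>.trans hnK) le_rfl
  have hnpos : (0:ℝ) < n := lt_of_lt_of_le one_pos hn1
  -- the q-th root
  set a : ℝ := (n : ℝ) ^ ((1:ℝ) / q) with ha_def
  have hq0 : (q:ℝ) ≠ 0 := by positivity
  have hapos : 0 < a := Real.rpow_pos_of_pos hnpos _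
  have ha_pow : a ^ q = (n : ℝ) := by
    rw [ha_def, ← Real.rpow_natCast ((n:ℝ) ^ ((1:ℝ)/q)) q, ← Real.rpow_mul hnpos.le]
    rw [one_div_mul_cancel hq0, Real.rpow_one]
  have haK : K ≤ a := by
    have : K ^ q ≤ a ^ q := by rw [ha_pow]; exact hnK
    exact le_of_pow_le_pow_left₀ (by omega) hapos.le this
  have ha1 : 1 ≤ a := hK1.trans haK
  -- head bounds
  have hC1a : C1 ≤ η * a := by
    have : C1 / η ≤ a := le_trans (le_trans (le_max_left _ _) (le_max_right _ _)) haK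
    calc C1 = η * (C1 / η) := by field_simp
      _ ≤ η * a := by gcongr
  have haq2 : a ≤ a ^ (q - 2) := by
    calc a = a ^ 1 := (pow_one a).symm
      _ ≤ a ^ (q - 2) := pow_le_pow_right₀ ha1 (by omega)
  have hC2a : C2 ≤ η * a ^ (q - 2) := by
    have : C2 / η ≤ a := le_trans (le_trans (le_max_right _ _) (le_max_right _ _)) haK
    calc C2 = η * (C2 / η) := by field_simp
      _ ≤ η * a ^ (q - 2) := by gcongr; exact this.trans haq2
  -- tail sum bound
  set δ : ℝ := η / a with hδ_def
  have hδpos : 0 < δ := by positivity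
  have hT : ∑ k ∈ Finset.Ioo (-(n:ℤ)) n \ Finset.Icc (-(M:ℤ)) M, |ρ k| ^ q ≤ η ^ q := by
    have hd : Disjoint (Finset.Ioo (-(n:ℤ)) n \ Finset.Icc (-(M:ℤ)) M) s₀ :=
      Finset.disjoint_of_subset_right hs₀sub Finset.sdiff_disjoint
    have := hs₀ _ hd
    exact le_of_lt this
  -- power identities
  have hq1 : q - 1 ≤ q := by omega
  have hq2 : (2:ℕ) ≤ q := by omega
  have hqm1 : q - (q - 1) = 1 := by omega
  have hqm2 : q - 2 + 2 = q := by omega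
  have haqsplit1 : a ^ q = a ^ (q - 1) * a := by rw [← pow_succ]; congr 1; omega
  have haqsplit2 : a ^ q = a ^ (q - 2) * a ^ 2 := by rw [← pow_add]; congr 1; omega
  have hηsplit1 : η ^ q = η ^ (q - 1) * η := by rw [← pow_succ]; congr 1; omega
  have hηsplit2 : η ^ q = η ^ (q - 2) * η ^ 2 := by rw [← pow_add]; congr 1; omega
  have hηq1 : η ^ (q - 1) ≤ η := by
    calc η ^ (q - 1) ≤ η ^ 1 := pow_le_pow_of_le_one hη.le hη1 (by omega)
      _ = η := pow_one η
  have hη2 : η ^ 2 ≤ η := by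
    calc η ^ 2 ≤ η ^ 1 := pow_le_pow_of_le_one hη.le hη1 (by omega)
      _ = η := pow_one η
  -- bound S1
  set S1 : ℝ := ∑ k ∈ Finset.Ioo (-(n:ℤ)) n, |ρ k| ^ (q - 1) with hS1
  set S2 : ℝ := ∑ k ∈ Finset.Ioo (-(n:ℤ)) n, |ρ k| ^ 2 with hS2
  have hS1nn : 0 ≤ S1 := Finset.sum_nonneg fun i _ => by positivity
  have hS2nn : 0 ≤ S2 := Finset.sum_nonneg fun i _ => by positivity
  have hS1b : S1 ≤ 4 * η * a := by
    have h := aux_split ρ q (q - 1) hq1 δ hδpos n M (η ^ q) hT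
    rw [hqm1, pow_one] at h
    have e1 : 2 * (n:ℝ) * δ ^ (q - 1) = 2 * η ^ (q - 1) * a := by
      rw [hδ_def, div_pow, ← ha_pow, haqsplit1]
      field_simp
    have e2 : η ^ q / δ = η ^ (q - 1) * a := by
      rw [hδ_def, hηsplit1]
      field_simp
    rw [e1, e2] at h
    have : C1 + 2 * η ^ (q - 1) * a + η ^ (q - 1) * a ≤ 4 * η * a := by
      have h1 : η ^ (q - 1) * a ≤ η * a := by gcongr
      linarith [hC1a, h1]
    exact h.trans this
  have hS2b : S2 ≤ 4 * η * a ^ (q - 2) := by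
    have h := aux_split ρ q 2 hq2 δ hδpos n M (η ^ q) hT
    have e1 : 2 * (n:ℝ) * δ ^ 2 = 2 * η ^ 2 * a ^ (q - 2) := by
      rw [hδ_def, div_pow, ← ha_pow, haqsplit2]
      field_simp
    have e2 : η ^ q / δ ^ (q - 2) = η ^ 2 * a ^ (q - 2) := by
      rw [hδ_def, hηsplit2, div_pow]
      field_simp
    rw [e1, e2] at h
    have : C2 + 2 * η ^ 2 * a ^ (q - 2) + η ^ 2 * a ^ (q - 2) ≤ 4 * η * a ^ (q - 2) := by
      have h1 : η ^ 2 * a ^ (q - 2) ≤ η * a ^ (q - 2) := by gcongr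
      linarith [hC2a, h1]
    exact h.trans this
  -- final computation
  have hfinal : (1 / (n:ℝ)) * S1 ^ 2 * S2 ≤ 64 * η ^ 3 := by
    have h1 : S1 ^ 2 ≤ (4 * η * a) ^ 2 := by
      apply pow_le_pow_left₀ hS1nn hS1b
    have h2 : (1 / (n:ℝ)) * S1 ^ 2 * S2 ≤ (1 / (n:ℝ)) * ((4 * η * a) ^ 2) * (4 * η * a ^ (q - 2)) := by
      apply mul_le_mul
      · apply mul_le_mul_of_nonneg_left h1 (by positivity)
      · exact hS2b
      · exact hS2nn
      · positivity
    have h3 : (1 / (n:ℝ)) * ((4 * η * a) ^ 2) * (4 * η * a ^ (q - 2)) = 64 * η ^ 3 := by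
      rw [← ha_pow, haqsplit2]
      field_simp
      ring
    linarith
  have hη3 : η ^ 3 ≤ η := by
    calc η ^ 3 ≤ η ^ 1 := pow_le_pow_of_le_one hη.le hη1 (by omega)
      _ = η := pow_one η
  have : 64 * η ^ 3 < ε := by linarith
  linarith
end
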